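/- arXiv:2405.00789 — 2 statements merged into one kernel-verified Lean document; each statement's English description precedes it below -/
import Mathlib

section
/- There exists exactly one function w : S₄ → ℝ such that for every permutation σ ∈ S₄, Σ_{τ ∈ S₄} 4^{c(τ)} · w(τ⁻¹σ) equals 1 if σ is the identity permutation and 0 otherwise. (Equivalently, the function g(σ) = 4^{c(σ)} is invertible under convolution in the group algebra of S₄.) -/
/-- The number of cycles of a permutation of `{1,2,3,4}`, counting fixed points as cycles
of length 1. -/
def cycleCount (π : Equiv.Perm (Fin 4)) : ℕ :=
  π.cycleType.card + (Finset.univ.filter fun a => π a = a).card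

/-- `20160` times the Weingarten function of `S₄` at `d = 4`. -/
def vq (π : Equiv.Perm (Fin 4)) : ℤ :=
  match cycleCount π, (Finset.univ.filter fun a => π a = a).card with
  | 4, _ => 134
  | 3, _ => -48
  | 2, 1 => 29
  | 2, _ => 22
  | _, _ => -20

/-- An explicit enumeration of the 24 permutations of `Fin 4`. -/
def pEnum (k : Fin 24) : Equiv.Perm (Fin 4) :=
  match k.val with
  | 0 => 1
  | 1 => Equiv.swap 2 3
  | 2 => Equiv.swap 1 2
  | 3 => Equiv.swap 1 3 * Equiv.swap 2 3
  | 4 => Equiv.swap 1 2 * Equiv.swap 2 3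
  | 5 => Equiv.swap 1 3
  | 6 => Equiv.swap 0 1
  | 7 => Equiv.swap 0 1 * Equiv.swap 2 3
  | 8 => Equiv.swap 0 2 * Equiv.swap 1 2
  | 9 => Equiv.swap 0 3 * Equiv.swap 1 3 * Equiv.swap 2 3
  | 10 => Equiv.swap 0 2 * Equiv.swap 1 2 * Equiv.swap 2 3
  | 11 => Equiv.swap 0 3 * Equiv.swap 1 3
  | 12 => Equiv.swap 0 1 * Equiv.swap 1 2
  | 13 => Equiv.swap 0 1 * Equiv.swap 1 3 * Equiv.swap 2 3
  | 14 => Equiv.swap 0 2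
  | 15 => Equiv.swap 0 3 * Equiv.swap 2 3
  | 16 => Equiv.swap 0 2 * Equiv.swap 1 3
  | 17 => Equiv.swap 0 3 * Equiv.swap 1 2 * Equiv.swap 2 3
  | 18 => Equiv.swap 0 1 * Equiv.swap 1 2 * Equiv.swap 2 3
  | 19 => Equiv.swap 0 1 * Equiv.swap 1 3
  | 20 => Equiv.swap 0 2 * Equiv.swap 2 3
  | 21 => Equiv.swap 0 3
  | 22 => Equiv.swap 0 2 * Equiv.swap 1 3 * Equiv.swap 2 3
  | _ => Equiv.swap 0 3 * Equiv.swap 1 2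

set_option maxHeartbeats 2000000 in
lemma pEnum_inj : Function.Injective pEnum := by decide

lemma pEnum_bij : Function.Bijective pEnum := by
  rw [Fintype.bijective_iff_injective_and_card]
  refine ⟨pEnum_inj, ?_⟩
  simp [Fintype.card_perm]
  rfl

set_option maxHeartbeats 4000000 in
set_option maxRecDepth 20000 in
lemma key : ∀ k : Fin 24,
    (∑ i : Fin 24, (4 : ℤ) ^ cycleCount (pEnum i) * vq ((pEnum i)⁻¹ * pEnum k)) =
      if pEnum k = 1 then 20160 else 0 := by decide

noncomputable def w0 : Equiv.Perm (Fin 4) → ℝ := fun σ => (vq σ : ℝ) / 20160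

lemma w0_prop : ∀ σ : Equiv.Perm (Fin 4),
    (∑ τ : Equiv.Perm (Fin 4), (4 : ℝ) ^ cycleCount τ * w0 (τ⁻¹ * σ)) =
      if σ = 1 then 1 else 0 := by
  intro σ
  obtain ⟨k, rfl⟩ := pEnum_bij.2 σ
  have hsum : (∑ τ : Equiv.Perm (Fin 4), (4 : ℝ) ^ cycleCount τ * w0 (τ⁻¹ * pEnum k))
      = ∑ i : Fin 24, (4 : ℝ) ^ cycleCount (pEnum i) * w0 ((pEnum i)⁻¹ * pEnum k) :=
    (Fintype.sum_bijective pEnum pEnum_bij _ _ (fun i => rfl)).symm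
  rw [hsum]
  have h := key k
  have h2 : ((∑ i : Fin 24, (4 : ℤ) ^ cycleCount (pEnum i) * vq ((pEnum i)⁻¹ * pEnum k) : ℤ) : ℝ)
      = ((if pEnum k = 1 then (20160 : ℤ) else 0 : ℤ) : ℝ) := by exact_mod_cast h
  push_cast at h2
  simp only [w0]
  rw [show (∑ i : Fin 24, (4 : ℝ) ^ cycleCount (pEnum i) * ((vq ((pEnum i)⁻¹ * pEnum k) : ℝ) / 20160))
      = (∑ i : Fin 24, (4 : ℝ) ^ cycleCount (pEnum i) * (vq ((pEnum i)⁻¹ * pEnum k) : ℝ)) / 20160 by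
    rw [Finset.sum_div]; exact Finset.sum_congr rfl fun i _ => by ring]
  rw [h2]
  split <;> norm_num

/-- There exists exactly one function `w : S₄ → ℝ` such that for every `σ ∈ S₄`,
`∑_{τ ∈ S₄} 4^{c(τ)} w(τ⁻¹σ)` equals `1` if `σ` is the identity permutation and `0`
otherwise. -/
theorem existsUnique_weingarten_S4 :
    ∃! w : Equiv.Perm (Fin 4) → ℝ,
      ∀ σ : Equiv.Perm (Fin 4),
        (∑ τ : Equiv.Perm (Fin 4), (4 : ℝ) ^ cycleCount τ * w (τ⁻¹ * σ)) =
          if σ = 1 then 1 else 0 := by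
  set G := Equiv.Perm (Fin 4)
  let toMA : (G → ℝ) → MonoidAlgebra ℝ G := fun w => MonoidAlgebra.ofCoeff (Finsupp.equivFunOnFinite.symm w)
  let gE : MonoidAlgebra ℝ G := MonoidAlgebra.ofCoeff (Finsupp.equivFunOnFinite.symm (fun τ => (4 : ℝ) ^ cycleCount τ))
  have conv : ∀ (w : G → ℝ) (σ : G),
      (gE * toMA w).coeff σ = ∑ τ : G, (4 : ℝ) ^ cycleCount τ * w (τ⁻¹ * σ) := by
    intro w σ
    rw [MonoidAlgebra.mul_apply_left, Finsupp.sum_fintype _ _ (fun a => by simp)]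
    rfl
  have hiff : ∀ w : G → ℝ,
      (∀ σ : G, (∑ τ : G, (4 : ℝ) ^ cycleCount τ * w (τ⁻¹ * σ)) = if σ = 1 then 1 else 0)
        ↔ gE * toMA w = 1 := by
    intro w
    constructor
    · intro hw
      ext σ
      rw [conv w σ, hw σ, MonoidAlgebra.one_def, MonoidAlgebra.single_apply]
      simp [eq_comm]
    · intro hw σ
      rw [← conv w σ, hw, MonoidAlgebra.one_def, MonoidAlgebra.single_apply]
      simp [eq_comm]
  refine ⟨w0, w0_prop, ?_⟩
  intro w' hw'
  have h1 : gE * toMA w' = 1 := (hiff w').mp hw'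
  have h0 : gE * toMA w0 = 1 := (hiff w0).mp w0_prop
  haveI : FiniteDimensional ℝ (MonoidAlgebra ℝ G) :=
    Module.Finite.equiv ((Finsupp.linearEquivFunOnFinite ℝ ℝ G).symm.trans (MonoidAlgebra.coeffLinearEquiv ℝ).symm)
  have hsurj : Function.Surjective (LinearMap.mulLeft ℝ gE) := by
    intro y
    exact ⟨toMA w0 * y, by rw [LinearMap.mulLeft_apply, ← mul_assoc, h0, one_mul]⟩
  have hinj : Function.Injective (LinearMap.mulLeft ℝ gE) :=
    (LinearMap.injective_iff_surjective).mpr hsurj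
  have heq : toMA w' = toMA w0 := by
    apply hinj
    rw [LinearMap.mulLeft_apply, LinearMap.mulLeft_apply, h1, h0]
  exact Finsupp.equivFunOnFinite.symm.injective (MonoidAlgebra.ofCoeff_injective heq)
end

section
/- Let w : S₄ → ℝ satisfy: for every σ ∈ S₄, Σ_{τ ∈ S₄} 4^{c(τ)} · w(τ⁻¹σ) equals 1 if σ is the identity and 0 otherwise. Then w(id) = 134/20160; w(σ) = −48/20160 for every transposition σ; w(σ) = 29/20160 for every 3-cycle σ; and w(σ) = −20/20160 for every 4-cycle σ. -/
set_option maxRecDepth 100000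
set_option maxHeartbeats 1000000

/-- A cheap computable formula for the number of cycles. -/
def ccount (π : Equiv.Perm (Fin 4)) : ℕ :=
  (4 - π.support.card) + (if π.support.card = 0 then 0 else if π.support.card ≤ 3 then 1
    else if π * π = 1 then 2 else 1)

/-- `20160` times the Weingarten function. -/
def vz (π : Equiv.Perm (Fin 4)) : ℤ :=
  if ccount π = 4 then 134 else if ccount π = 3 then -48
   else if ccount π = 1 then -20 else if π * π = 1 then 22 else 29

theorem hcc : ∀ π : Equiv.Perm (Fin 4), cycleCount π = ccount π := by decide

theorem key_s13 : ∀ σ : Equiv.Perm (Fin 4),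
    (∑ τ : Equiv.Perm (Fin 4), (4:ℤ) ^ ccount τ * vz (τ * σ)) =
    if σ = 1 then 20160 else 0 := by decide

theorem vzcomm : ∀ a b : Equiv.Perm (Fin 4), vz (a * b) = vz (b * a) := by decide

theorem ccinv : ∀ τ : Equiv.Perm (Fin 4), ccount τ⁻¹ = ccount τ := by decide

/-- If `w : S₄ → ℝ` satisfies `∑_{τ ∈ S₄} 4^{c(τ)} w(τ⁻¹σ) = [σ = id]` for every `σ ∈ S₄`,
then `w(id) = 134/20160`, `w(σ) = −48/20160` for every transposition `σ`,
`w(σ) = 29/20160` for every 3-cycle `σ`, and `w(σ) = −20/20160` for every 4-cycle `σ`. -/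
theorem weingarten_S4_values (w : Equiv.Perm (Fin 4) → ℝ)
    (hw : ∀ σ : Equiv.Perm (Fin 4),
      (∑ τ : Equiv.Perm (Fin 4), (4 : ℝ) ^ cycleCount τ * w (τ⁻¹ * σ)) =
        if σ = 1 then 1 else 0) :
    w 1 = 134 / 20160 ∧
    (∀ σ : Equiv.Perm (Fin 4), σ.IsSwap → w σ = -48 / 20160) ∧
    (∀ σ : Equiv.Perm (Fin 4), σ.IsThreeCycle → w σ = 29 / 20160) ∧
    (∀ σ : Equiv.Perm (Fin 4), σ.cycleType = {4} → w σ = -20 / 20160) := by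
  have hw' : ∀ σ : Equiv.Perm (Fin 4),
      (∑ τ : Equiv.Perm (Fin 4), (4 : ℝ) ^ ccount τ * w (τ⁻¹ * σ)) =
        if σ = 1 then 1 else 0 := by
    intro σ
    rw [← hw σ]
    exact Finset.sum_congr rfl fun τ _ => by rw [hcc]
  have keyR : ∀ σ : Equiv.Perm (Fin 4),
      (∑ τ : Equiv.Perm (Fin 4), (4:ℝ) ^ ccount τ * (vz (τ * σ) : ℝ)) =
      if σ = 1 then 20160 else 0 := by
    intro σ
    have h := congrArg (fun z : ℤ => (z : ℝ)) (key_s13 σ)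
    push_cast at h
    simpa [apply_ite (fun z : ℤ => (z : ℝ))] using h
  have main : ∀ ρ : Equiv.Perm (Fin 4), w ρ = (vz ρ : ℝ) / 20160 := by
    intro ρ
    have E : (vz ρ : ℝ) = 20160 * w ρ := by
      calc (vz ρ : ℝ)
          = ∑ σ : Equiv.Perm (Fin 4), (vz (ρ * σ⁻¹) : ℝ) * (if σ = 1 then (1:ℝ) else 0) := by
            simp
        _ = ∑ σ : Equiv.Perm (Fin 4), (vz (ρ * σ⁻¹) : ℝ) *
              ∑ τ : Equiv.Perm (Fin 4), (4:ℝ) ^ ccount τ * w (τ⁻¹ * σ) :=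
            Finset.sum_congr rfl fun σ _ => by rw [hw' σ]
        _ = ∑ σ : Equiv.Perm (Fin 4), ∑ τ : Equiv.Perm (Fin 4),
              (vz (ρ * σ⁻¹) : ℝ) * ((4:ℝ) ^ ccount τ * w (τ⁻¹ * σ)) :=
            Finset.sum_congr rfl fun σ _ => Finset.mul_sum _ _ _
        _ = ∑ τ : Equiv.Perm (Fin 4), ∑ σ : Equiv.Perm (Fin 4),
              (vz (ρ * σ⁻¹) : ℝ) * ((4:ℝ) ^ ccount τ * w (τ⁻¹ * σ)) := Finset.sum_comm
        _ = ∑ τ : Equiv.Perm (Fin 4), ∑ μ : Equiv.Perm (Fin 4),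
              (vz (ρ * (τ * μ)⁻¹) : ℝ) * ((4:ℝ) ^ ccount τ * w (τ⁻¹ * (τ * μ))) := by
            refine Finset.sum_congr rfl fun τ _ => ?_
            exact (Fintype.sum_equiv (Equiv.mulLeft τ) _ _ fun μ => rfl).symm
        _ = ∑ τ : Equiv.Perm (Fin 4), ∑ μ : Equiv.Perm (Fin 4),
              ((4:ℝ) ^ ccount τ * (vz (τ⁻¹ * (ρ * μ⁻¹)) : ℝ)) * w μ := by
            refine Finset.sum_congr rfl fun τ _ => Finset.sum_congr rfl fun μ _ => ?_
            rw [show ρ * (τ * μ)⁻¹ = (ρ * μ⁻¹) * τ⁻¹ by group,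
                show τ⁻¹ * (τ * μ) = μ by group, vzcomm (ρ * μ⁻¹) τ⁻¹]
            ring
        _ = ∑ μ : Equiv.Perm (Fin 4),
              (∑ τ : Equiv.Perm (Fin 4), (4:ℝ) ^ ccount τ * (vz (τ * (ρ * μ⁻¹)) : ℝ)) * w μ := by
            rw [Finset.sum_comm]
            refine Finset.sum_congr rfl fun μ _ => ?_
            rw [Finset.sum_mul]
            refine Fintype.sum_equiv (Equiv.inv _) _ _ fun τ => ?_
            simp [ccinv]
        _ = ∑ μ : Equiv.Perm (Fin 4), (if ρ * μ⁻¹ = 1 then (20160:ℝ) else 0) * w μ :=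
            Finset.sum_congr rfl fun μ _ => by rw [keyR]
        _ = 20160 * w ρ := by
            simp [mul_inv_eq_one, ite_mul, Finset.sum_ite_eq]
    rw [eq_div_iff (by norm_num : (20160:ℝ) ≠ 0)]
    linarith
  refine ⟨?_, ?_, ?_, ?_⟩
  · rw [main 1]
    norm_num [show vz 1 = 134 by decide]
  · intro σ hσ
    have hs : σ.support.card = 2 := Equiv.Perm.card_support_eq_two.2 hσ
    have hc : ccount σ = 3 := by simp [ccount, hs]
    rw [main σ]
    norm_num [vz, hc]
  · intro σ hσ
    have hs : σ.support.card = 3 := by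
      have := Equiv.Perm.sum_cycleType σ
      rw [hσ.cycleType] at this
      simpa using this.symm
    have hc : ccount σ = 2 := by simp [ccount, hs]
    have hne : σ * σ ≠ 1 := by
      intro h
      have h2 : orderOf σ ∣ 2 := orderOf_dvd_of_pow_eq_one (by rw [pow_two]; exact h)
      rw [hσ.orderOf] at h2
      norm_num at h2
    rw [main σ]
    norm_num [vz, hc, hne]
  · intro σ hσ
    have hs : σ.support.card = 4 := by
      have := Equiv.Perm.sum_cycleType σ
      rw [hσ] at this
      simpa using this.symm
    have hne : σ * σ ≠ 1 := by
      intro h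
      have h2 : orderOf σ ∣ 2 := orderOf_dvd_of_pow_eq_one (by rw [pow_two]; exact h)
      have h4 : orderOf σ = 4 := by
        have := σ.lcm_cycleType
        rw [hσ] at this
        simpa using this.symm
      rw [h4] at h2
      norm_num at h2
    have hc : ccount σ = 1 := by simp [ccount, hs, hne]
    rw [main σ]
    norm_num [vz, hc]
end
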